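/- In a trim lattice L, if y and z both cover w and γ(w ⋖ y) < γ(w ⋖ z), where γ(u ⋖ v) = min{i : u ∨ (x_i ∧ v) = v} for the left modular chain x_0 ⋖ ... ⋖ x_n, then y ∨ z covers z. -/

import Mathlib

/-!
Say that a cover `p ⋖ r` has label `k + 1` if `r ≤ p ⊔ x (k + 1)` but not `r ≤ p ⊔ x k`; by left
modularity this is the paper's `γ`. Counting irreducibles shows that each step `x k ⋖ x (k + 1)` has
exactly one join-irreducible `j ≤ x (k + 1)`, `j ≰ x k`, and exactly one meet-irreducible
`m ≥ x k`, `x (k + 1) ≰ m`; a cover `p ⋖ r` of label `k + 1` is then `r = p ⊔ j`.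

Let `i = γ(w ⋖ y)`. A cover `z ⋖ r ≤ y ⊔ z` has label at most `i`, as `y ⊔ z ≤ z ⊔ x i`. If its
label `k + 1` were smaller, uniqueness of `m` would force `x (k + 1) ≤ y ⊔ x k`, and left modularity
of `x k` would give a cover `y ⋖ r' ≤ y ⊔ z` of label at most `k`, with the roles of `y` and `z`
exchanged (both labels of covers of `w` are at least `i`); this descent cannot go on forever. So `r`
has label `i`, and `r = z ⊔ j ≥ w ⊔ j = y`, i.e. `r = y ⊔ z`.
-/

variable {α : Type*}

/-- An element is join-irreducible if it is not the minimum and is not a join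
of two strictly smaller elements. -/
def JoinIrred [Lattice α] (a : α) : Prop :=
  ¬ IsBot a ∧ ∀ b c : α, b < a → c < a → b ⊔ c ≠ a

/-- An element is meet-irreducible if it is not the maximum and is not a meet
of two strictly larger elements. -/
def MeetIrred [Lattice α] (a : α) : Prop :=
  ¬ IsTop a ∧ ∀ b c : α, a < b → a < c → b ⊓ c ≠ a

/-- An element `x` is left modular if `(y ⊔ x) ⊓ z = y ⊔ (x ⊓ z)` for all `y < z`. -/
def LeftModular [Lattice α] (x : α) : Prop :=
  ∀ y z : α, y < z → (y ⊔ x) ⊓ z = y ⊔ (x ⊓ z)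

/-- A maximal chain `⊥ = x 0 ⋖ x 1 ⋖ ⋯ ⋖ x n = ⊤` all of whose elements are left modular. -/
def IsLMChain [Lattice α] {n : ℕ} (x : Fin (n + 1) → α) : Prop :=
  IsBot (x 0) ∧ IsTop (x (Fin.last n)) ∧ (∀ i : Fin n, x i.castSucc ⋖ x i.succ) ∧
    ∀ i, LeftModular (x i)

/-- A finite lattice is trim if it has a left modular maximal chain of `n + 1` elements,
exactly `n` join-irreducibles and exactly `n` meet-irreducibles. -/
def Trim (α : Type*) [Lattice α] [Finite α] : Prop :=
  ∃ (n : ℕ) (x : Fin (n + 1) → α), IsLMChain x ∧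
    Nat.card {v : α // JoinIrred v} = n ∧ Nat.card {v : α // MeetIrred v} = n

theorem subsingleton_setOf_rel_of_card_le {S ι : Type*} [Finite S] {L : S → ι → Prop}
    (hfun : ∀ s k k', L s k → L s k' → k = k') (hsurj : ∀ k, ∃ s, L s k)
    (hcard : Nat.card S ≤ Nat.card ι) (k : ι) : {s | L s k}.Subsingleton := by
  choose g hg using hsurj
  have hg_inj : g.Injective := fun k k' h => hfun _ _ _ (hg k) (h ▸ hg k')
  have hg_surj := (hg_inj.bijective_of_nat_card_le hcard).2
  have hg_eq : ∀ s, L s k → s = g k := by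
    intro s hs
    obtain ⟨k₁, rfl⟩ := hg_surj s
    rw [hfun _ _ _ (hg k₁) hs]
  exact fun s hs s' hs' => (hg_eq s hs).trans (hg_eq s' hs').symm

namespace Fin

variable {n : ℕ} {P : Fin (n + 1) → Prop}

theorem exists_succ_le_of_not_zero (h0 : ¬ P 0) :
    ∀ l, P l → ∃ k : Fin n, k.succ ≤ l ∧ P k.succ ∧ ¬ P k.castSucc := by
  refine Fin.induction (fun h => absurd h h0) fun k ih hk => ?_
  by_cases h : P k.castSucc
  · obtain ⟨k', hk', hk'P⟩ := ih h
    exact ⟨k', hk'.trans k.castSucc_le_succ, hk'P⟩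
  · exact ⟨k, le_rfl, hk, h⟩

theorem eq_of_monotone_of_succ_of_not_castSucc (hP : Monotone P) {k k' : Fin n}
    (hk : P k.succ ∧ ¬ P k.castSucc) (hk' : P k'.succ ∧ ¬ P k'.castSucc) : k = k' := by
  by_contra hne
  rcases lt_or_gt_of_ne hne with h | h
  · exact hk'.2 (hP (succ_le_castSucc_iff.mpr h) hk.1)
  · exact hk.2 (hP (succ_le_castSucc_iff.mpr h) hk'.1)

end Fin

section Lattice

variable [Lattice α]

theorem LeftModular.sup_inf_eq {a p r : α} (ha : LeftModular a) (hpr : p ≤ r) :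
    (p ⊔ a) ⊓ r = p ⊔ (a ⊓ r) := by
  rcases hpr.lt_or_eq with hlt | rfl
  · exact ha p r hlt
  · rw [inf_eq_right.mpr le_sup_left, sup_eq_left.mpr inf_le_right]

theorem LeftModular.sup_inf_eq_iff {a p r : α} (ha : LeftModular a) (hpr : p ≤ r) :
    p ⊔ (a ⊓ r) = r ↔ r ≤ p ⊔ a := by
  rw [← ha.sup_inf_eq hpr, inf_eq_right]

theorem LeftModular.not_inf_le_of_le_sup {a p r : α} (ha : LeftModular a) (hpr : p < r)
    (h : r ≤ p ⊔ a) : ¬ a ⊓ r ≤ p := fun hle =>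
  hpr.ne ((ha.sup_inf_eq_iff hpr.le).mpr h ▸ (sup_eq_left.mpr hle)).symm

theorem CovBy.inf_le_of_not_le_sup {a p r : α} (hpr : p ⋖ r) (h : ¬ r ≤ p ⊔ a) : a ⊓ r ≤ p := by
  rcases hpr.eq_or_eq (le_sup_left : p ≤ p ⊔ a ⊓ r) (sup_le hpr.le inf_le_right) with hp | hr
  · exact le_sup_right.trans hp.le
  · exact absurd (hr ▸ sup_le_sup_left inf_le_left p) h

end Lattice

section Finite

variable [Lattice α] [Finite α]

theorem exists_joinIrred_le_not_le {a b : α} (h : ¬ b ≤ a) :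
    ∃ j : α, JoinIrred j ∧ j ≤ b ∧ ¬ j ≤ a := by
  obtain ⟨j, ⟨hjb, hja⟩, hmin⟩ :=
    wellFounded_lt.has_min {t : α | t ≤ b ∧ ¬ t ≤ a} ⟨b, le_rfl, h⟩
  have below : ∀ t < j, t ≤ a := fun t ht => by_contra fun hta => hmin t ⟨ht.le.trans hjb, hta⟩ ht
  refine ⟨j, ⟨fun hbot => hja (hbot a), fun c d hc hd hcd => ?_⟩, hjb, hja⟩
  exact hja (hcd ▸ sup_le (below c hc) (below d hd))

theorem exists_meetIrred_ge_not_le {a b : α} (h : ¬ b ≤ a) :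
    ∃ m : α, MeetIrred m ∧ a ≤ m ∧ ¬ b ≤ m :=
  exists_joinIrred_le_not_le (α := αᵒᵈ) h

theorem covBy_of_forall_covBy_le {z v : α} (hzv : z < v) (h : ∀ r, z ⋖ r → r ≤ v → v ≤ r) :
    z ⋖ v := by
  refine ⟨hzv, fun c hzc hcv => ?_⟩
  obtain ⟨r, hzr, hrc⟩ := exists_covBy_le_of_lt hzc
  exact hcv.not_ge ((h r hzr (hrc.trans hcv.le)).trans hrc)

end Finite

section Chain

variable [Lattice α] {n : ℕ} {x : Fin (n + 1) → α}

/-- For a cover `p ⋖ r` this says `γ(p ⋖ r) = k + 1`, by `LeftModular.sup_inf_eq_iff`. -/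
def HasLabel (x : Fin (n + 1) → α) (p r : α) (k : Fin n) : Prop :=
  r ≤ p ⊔ x k.succ ∧ ¬ r ≤ p ⊔ x k.castSucc

theorem exists_hasLabel (h0 : IsBot (x 0)) {p r : α} (hpr : p < r) {l : Fin (n + 1)}
    (hl : r ≤ p ⊔ x l) : ∃ k : Fin n, k.succ ≤ l ∧ HasLabel x p r k :=
  Fin.exists_succ_le_of_not_zero (P := fun l => r ≤ p ⊔ x l)
    (fun h => hpr.not_ge (h.trans (sup_le le_rfl (h0 p)))) l hl

variable [Finite α]

theorem subsingleton_joinIrred_step (hx : StrictMono x)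
    (hcard : Nat.card {v : α // JoinIrred v} ≤ n) (k : Fin n) :
    {j : α | JoinIrred j ∧ j ≤ x k.succ ∧ ¬ j ≤ x k.castSucc}.Subsingleton := by
  intro j hj j' hj'
  have hstep := subsingleton_setOf_rel_of_card_le (S := {v : α // JoinIrred v})
    (L := fun j k => (j : α) ≤ x k.succ ∧ ¬ (j : α) ≤ x k.castSucc)
    (fun j _ _ => Fin.eq_of_monotone_of_succ_of_not_castSucc (P := fun l => (j : α) ≤ x l)
      fun _ _ hll' hj => hj.trans (hx.monotone hll'))
    (fun k => by
      obtain ⟨j, hj, hjk, hjk'⟩ := exists_joinIrred_le_not_le (hx k.castSucc_lt_succ).not_ge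
      exact ⟨⟨j, hj⟩, hjk, hjk'⟩)
    (by simpa using hcard) k
  exact congrArg Subtype.val (@hstep ⟨j, hj.1⟩ hj.2 ⟨j', hj'.1⟩ hj'.2)

theorem subsingleton_meetIrred_step (hx : StrictMono x)
    (hcard : Nat.card {v : α // MeetIrred v} ≤ n) (k : Fin n) :
    {m : α | MeetIrred m ∧ x k.castSucc ≤ m ∧ ¬ x k.succ ≤ m}.Subsingleton := by
  have hdual := subsingleton_joinIrred_step (α := αᵒᵈ) (x := fun l => OrderDual.toDual (x l.rev))
    (fun a b h => show x b.rev < x a.rev from hx (Fin.rev_lt_rev.mpr h)) hcard k.rev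
  intro m hm m' hm'
  exact @hdual (OrderDual.toDual m) ⟨hm.1, by simpa [Fin.rev_succ, Fin.rev_castSucc] using hm.2⟩
    (OrderDual.toDual m') ⟨hm'.1, by simpa [Fin.rev_succ, Fin.rev_castSucc] using hm'.2⟩

theorem le_sup_castSucc_of_hasLabel (hx : StrictMono x)
    (hcard : Nat.card {v : α // MeetIrred v} ≤ n) {p q r : α} {k : Fin n} (hr : r ≤ p ⊔ q)
    (hk : HasLabel x p r k) : x k.succ ≤ q ⊔ x k.castSucc := by
  by_contra hq
  obtain ⟨m, hm, hpm, hrm⟩ := exists_meetIrred_ge_not_le hk.2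
  obtain ⟨m', hm', hqm', hkm'⟩ := exists_meetIrred_ge_not_le hq
  have hkm : ¬ x k.succ ≤ m := fun h => hrm (hk.1.trans (sup_le (le_sup_left.trans hpm) h))
  have hmm' : m = m' := subsingleton_meetIrred_step hx hcard k
    ⟨hm, le_sup_right.trans hpm, hkm⟩ ⟨hm', le_sup_right.trans hqm', hkm'⟩
  exact hrm (hr.trans (sup_le (le_sup_left.trans hpm) (hmm' ▸ le_sup_left.trans hqm')))

theorem exists_covBy_le_sup_castSucc_of_hasLabel (hx : StrictMono x)
    (hlm : ∀ l, LeftModular (x l)) (hcard : Nat.card {v : α // MeetIrred v} ≤ n) {p q r : α} {k : Fin n} (hpr : p ⋖ r)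
    (hr : r ≤ p ⊔ q) (hk : HasLabel x p r k) (hq : x k.succ ⊓ q ≤ p) :
    ∃ r', q ⋖ r' ∧ r' ≤ q ⊔ p ∧ r' ≤ q ⊔ x k.castSucc := by
  have hxr : x k.succ ⊓ r ≤ q ⊔ x k.castSucc ⊓ (p ⊔ q) := calc
    x k.succ ⊓ r ≤ (q ⊔ x k.castSucc) ⊓ (p ⊔ q) :=
      inf_le_inf (le_sup_castSucc_of_hasLabel hx hcard hr hk) hr
    _ = q ⊔ x k.castSucc ⊓ (p ⊔ q) := (hlm _).sup_inf_eq le_sup_right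
  have hnot : ¬ x k.castSucc ⊓ (p ⊔ q) ≤ q := fun h =>
    (hlm k.succ).not_inf_le_of_le_sup hpr.lt hk.1
      ((le_inf inf_le_left (hxr.trans (sup_le le_rfl h))).trans hq)
  obtain ⟨r', hqr', hr'⟩ := exists_covBy_le_of_lt (left_lt_sup.mpr hnot)
  exact ⟨r', hqr', hr'.trans (sup_le le_sup_left (inf_le_right.trans (sup_comm p q).le)),
    hr'.trans (sup_le_sup_left inf_le_left q)⟩

theorem not_le_sup_of_covBy_of_lt (hx : StrictMono x) (hlm : ∀ l, LeftModular (x l))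
    (h0 : IsBot (x 0)) (hcard : Nat.card {v : α // MeetIrred v} ≤ n) {i : Fin (n + 1)}
    {p q r : α} (hpq : ∀ l < i, x l ⊓ p ≤ q) (hqp : ∀ l < i, x l ⊓ q ≤ p) (hpr : p ⋖ r)
    (hr : r ≤ p ⊔ q) {μ : Fin (n + 1)} (hμ : μ < i) : ¬ r ≤ p ⊔ x μ := by
  induction μ using WellFoundedLT.induction generalizing p q r with
  | ind μ ih =>
    intro hrμ
    obtain ⟨k, hkμ, hk⟩ := exists_hasLabel h0 hpr.lt hrμ
    obtain ⟨r', hqr', hr'qp, hr'k⟩ := exists_covBy_le_sup_castSucc_of_hasLabel hx hlm hcard hpr hr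
      hk (hqp _ (hkμ.trans_lt hμ))
    have hkμ' : k.castSucc < μ := k.castSucc_lt_succ.trans_le hkμ
    exact ih k.castSucc hkμ' hqp hpq hqr' hr'qp (hkμ'.trans hμ) hr'k

theorem exists_joinIrred_step_eq_sup_of_hasLabel (hlm : ∀ l, LeftModular (x l)) {p r : α}
    {k : Fin n} (hpr : p ⋖ r) (hk : HasLabel x p r k) :
    ∃ j, (JoinIrred j ∧ j ≤ x k.succ ∧ ¬ j ≤ x k.castSucc) ∧ r = p ⊔ j := by
  obtain ⟨j, hj, hjxr, hjp⟩ :=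
    exists_joinIrred_le_not_le ((hlm k.succ).not_inf_le_of_le_sup hpr.lt hk.1)
  have hjr : j ≤ r := hjxr.trans inf_le_right
  have hjk : ¬ j ≤ x k.castSucc := fun h =>
    hjp ((le_inf h hjr).trans (hpr.inf_le_of_not_le_sup hk.2))
  refine ⟨j, ⟨hj, hjxr.trans inf_le_left, hjk⟩, ?_⟩
  exact ((hpr.eq_or_eq le_sup_left (sup_le hpr.le hjr)).resolve_left
    fun h => hjp (h ▸ le_sup_right)).symm

theorem HasLabel.le_of_le (hx : StrictMono x) (hlm : ∀ l, LeftModular (x l))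
    (hcard : Nat.card {v : α // JoinIrred v} ≤ n) {p r p' r' : α} {k : Fin n} (hpr : p ⋖ r)
    (hpr' : p' ⋖ r') (hk : HasLabel x p r k) (hk' : HasLabel x p' r' k) (hp : p ≤ r') :
    r ≤ r' := by
  obtain ⟨j, hj, rfl⟩ := exists_joinIrred_step_eq_sup_of_hasLabel hlm hpr hk
  obtain ⟨j', hj', rfl⟩ := exists_joinIrred_step_eq_sup_of_hasLabel hlm hpr' hk'
  exact sup_le hp (subsingleton_joinIrred_step hx hcard k hj hj' ▸ le_sup_right)

end Chain

/-- In a trim lattice with left modular chain `x`, if `y` and `z` both cover `w` and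
`γ(w ⋖ y) < γ(w ⋖ z)` where `γ(u ⋖ v) = min {i | u ⊔ (x i ⊓ v) = v}`, then
`y ⊔ z` covers `z`. -/
theorem weak_semimodularity [Lattice α] [Finite α] {n : ℕ}
    (x : Fin (n + 1) → α) (hx : IsLMChain x)
    (hJ : Nat.card {v : α // JoinIrred v} = n)
    (hM : Nat.card {v : α // MeetIrred v} = n)
    {w y z : α} (hy : w ⋖ y) (hz : w ⋖ z)
    (i j : Fin (n + 1))
    (hi : IsLeast {l : Fin (n + 1) | w ⊔ (x l ⊓ y) = y} i)
    (hj : IsLeast {l : Fin (n + 1) | w ⊔ (x l ⊓ z) = z} j)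
    (hij : i < j) :
    z ⋖ y ⊔ z := by
  obtain ⟨h0, -, hcov, hlm⟩ := hx
  have hmono : StrictMono x := Fin.strictMono_iff_lt_succ.2 fun k => (hcov k).lt
  simp only [fun l => (hlm l).sup_inf_eq_iff hy.le, fun l => (hlm l).sup_inf_eq_iff hz.le] at hi hj
  have hlow : ∀ {v : α} {γ : Fin (n + 1)}, w ⋖ v → IsLeast {l | v ≤ w ⊔ x l} γ →
      ∀ l < γ, x l ⊓ v ≤ w := fun hv hγ l hl =>
    hv.inf_le_of_not_le_sup fun h => hl.not_ge (hγ.2 h)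
  have hyz : y ≠ z := fun h => hij.ne (hi.unique (h ▸ hj))
  obtain ⟨k, hki_le, hk⟩ := exists_hasLabel h0 hy.lt hi.1
  have hki : k.succ = i := le_antisymm hki_le (hi.2 hk.1)
  refine covBy_of_forall_covBy_le ?_ fun r hzr hr => sup_le ?_ hzr.le
  · exact lt_of_le_of_ne le_sup_right fun h =>
      hyz ((hz.eq_or_eq hy.le (h ▸ le_sup_left)).resolve_left hy.ne')
  have hri : r ≤ z ⊔ x i := hr.trans (sup_le (hi.1.trans (sup_le_sup_right hz.le _)) le_sup_left)
  obtain ⟨k', hk'i, hk'⟩ := exists_hasLabel h0 hzr.lt hri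
  have hk'_not_lt : ¬ k'.succ < i := fun hlt =>
    not_le_sup_of_covBy_of_lt hmono hlm h0 hM.le
      (fun l hl => (hlow hz hj l (hl.trans hij)).trans hy.le)
      (fun l hl => (hlow hy hi l hl).trans hz.le) hzr (sup_comm y z ▸ hr) hlt hk'.1
  have hk'k : k' = k := Fin.succ_injective _ (hki ▸ le_antisymm hk'i (not_lt.mp hk'_not_lt))
  exact hk.le_of_le hmono hlm hJ.le hy hzr (hk'k ▸ hk') (hz.le.trans hzr.le)
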